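/- Let d be a positive natural number, let ρ be a density matrix on ℂ² ⊗ ℂ^d, let V_A be a 2 × 2 unitary matrix and V_B a d × d unitary matrix, and set ρ' = (V_A ⊗ₖ V_B) ρ (V_A ⊗ₖ V_B)ᴴ. Then the supremum over all traceless 2 × 2 unitary matrices U of √F(ρ', (U ⊗ₖ I_d) ρ' (U ⊗ₖ I_d)ᴴ) equals the supremum over all traceless 2 × 2 unitary matrices U of √F(ρ, (U ⊗ₖ I_d) ρ (U ⊗ₖ I_d)ᴴ); that is, the Bures discord of response is invariant under local unitary transformations of the state. -/

import Mathlib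

/-!
The matrix square root is `CFC.sqrt`, which commutes with conjugation by a unitary `W`; hence
`√(Wρ Wᴴ) (Wσ Wᴴ) √(Wρ Wᴴ) = W (√ρ σ √ρ) Wᴴ`, and cyclicity of the trace gives
`√F(Wρ Wᴴ, Wσ Wᴴ) = √F(ρ, σ)`. For `W = V_A ⊗ V_B` one has `(U ⊗ I) W = W (V_Aᴴ U V_A ⊗ I)`,
so the fidelity of `ρ' = Wρ Wᴴ` for `U` is the fidelity of `ρ` for `V_Aᴴ U V_A`, and
`U ↦ V_Aᴴ U V_A` is a bijection of the traceless unitaries.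
-/

open Matrix Kronecker
open scoped ComplexOrder

open scoped Classical in
/-- The positive semidefinite square root of a matrix (junk value `0` if not PSD). -/
noncomputable def msqrt {n : Type*} [Fintype n] [DecidableEq n] (A : Matrix n n ℂ) : Matrix n n ℂ :=
  if h : A.PosSemidef then
    (h.1.eigenvectorUnitary : Matrix n n ℂ) * diagonal ((↑) ∘ (√·) ∘ h.1.eigenvalues) *
      (star h.1.eigenvectorUnitary : Matrix n n ℂ)
  else 0

/-- Square-root fidelity `tr √(√ρ · σ · √ρ)` (as a real number). -/
noncomputable def sqrtFid {n : Type*} [Fintype n] [DecidableEq n] (ρ σ : Matrix n n ℂ) : ℝ :=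
  ((msqrt (msqrt ρ * σ * msqrt ρ)).trace).re

/-- Trace norm `tr √(Xᴴ X)` (as a real number). -/
noncomputable def traceNorm {n : Type*} [Fintype n] [DecidableEq n] (X : Matrix n n ℂ) : ℝ :=
  ((msqrt (Xᴴ * X)).trace).re

/-- The Bell-diagonal two-qubit state with Bell-basis eigenvalues `γ₁, γ₂, γ₃, γ₄`. -/
noncomputable def bellDiag (γ₁ γ₂ γ₃ γ₄ : ℝ) :
    Matrix (Fin 2 × Fin 2) (Fin 2 × Fin 2) ℂ :=
  Matrix.reindex finProdFinEquiv.symm finProdFinEquiv.symm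
    ((1 / 2 : ℂ) • !![(γ₁ : ℂ) + γ₂, 0, 0, (γ₁ : ℂ) - γ₂;
        0, (γ₃ : ℂ) + γ₄, (γ₃ : ℂ) - γ₄, 0;
        0, (γ₃ : ℂ) - γ₄, (γ₃ : ℂ) + γ₄, 0;
        (γ₁ : ℂ) - γ₂, 0, 0, (γ₁ : ℂ) + γ₂])

namespace CFC

variable {A : Type*} [PartialOrder A] [Ring A] [TopologicalSpace A] [StarRing A]
  [Module ℝ A] [SMulCommClass ℝ A A] [IsScalarTower ℝ A A] [StarOrderedRing A]
  [NonUnitalContinuousFunctionalCalculus ℝ A IsSelfAdjoint] [NonnegSpectrumClass ℝ A]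
  [IsSemitopologicalRing A] [T2Space A]

lemma sqrt_unitary_conj {u : A} (hu : u ∈ unitary A) (a : A) :
    sqrt (u * a * star u) = u * sqrt a * star u := by
  by_cases ha : 0 ≤ a
  · refine sqrt_unique ?_ (star_right_conjugate_nonneg (sqrt_nonneg a) u)
    calc u * sqrt a * star u * (u * sqrt a * star u)
        = u * sqrt a * (star u * u) * sqrt a * star u := by simp only [mul_assoc]
      _ = u * a * star u := by
        rw [Unitary.star_mul_self_of_mem hu, mul_one, mul_assoc u, sqrt_mul_sqrt_self a]
  · have hua : ¬ 0 ≤ u * a * star u :=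
      (Unitary.isUnit_coe (U := ⟨u, hu⟩)).star_right_conjugate_nonneg_iff.not.mpr ha
    rw [sqrt_of_not_nonneg ha, sqrt_of_not_nonneg hua, mul_zero, zero_mul]

end CFC

section Fidelity

open scoped MatrixOrder

variable {n : Type*} [Fintype n] [DecidableEq n]

lemma msqrt_eq_cfcSqrt (A : Matrix n n ℂ) : msqrt A = CFC.sqrt A := by
  by_cases hA : A.PosSemidef
  · rw [msqrt, dif_pos hA, CFC.sqrt_eq_cfc, cfc_nnreal_eq_real _ A, hA.1.cfc_eq,
      IsHermitian.cfc, Unitary.conjStarAlgAut_apply]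
    congr 3
    funext i
    simp [max_eq_left (hA.eigenvalues_nonneg i)]
  · rw [msqrt, dif_neg hA, CFC.sqrt_of_not_nonneg (by rwa [nonneg_iff_posSemidef])]

lemma msqrt_unitary_conj {W : Matrix n n ℂ} (hW : W ∈ unitary (Matrix n n ℂ))
    (A : Matrix n n ℂ) : msqrt (W * A * Wᴴ) = W * msqrt A * Wᴴ := by
  simp only [msqrt_eq_cfcSqrt, ← star_eq_conjTranspose, CFC.sqrt_unitary_conj hW]

lemma sqrtFid_unitary_conj {W : Matrix n n ℂ} (hW : W ∈ unitary (Matrix n n ℂ))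
    (ρ σ : Matrix n n ℂ) : sqrtFid (W * ρ * Wᴴ) (W * σ * Wᴴ) = sqrtFid ρ σ := by
  have hWW : Wᴴ * W = 1 := Unitary.star_mul_self_of_mem hW
  have hconj : W * msqrt ρ * Wᴴ * (W * σ * Wᴴ) * (W * msqrt ρ * Wᴴ)
      = W * (msqrt ρ * σ * msqrt ρ) * Wᴴ := by
    simp only [Matrix.mul_assoc]
    simp only [← Matrix.mul_assoc Wᴴ W, hWW, Matrix.one_mul]
  rw [sqrtFid, msqrt_unitary_conj hW, hconj, msqrt_unitary_conj hW, trace_mul_cycle, hWW,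
    Matrix.one_mul, sqrtFid]

end Fidelity

lemma star_mul_mul_mul_star_mul_of_mem_unitary {R : Type*} [Monoid R] [StarMul R] {u : R}
    (hu : u ∈ unitary R) (x : R) : star u * (u * x * star u) * u = x := by
  simp only [mul_assoc, Unitary.star_mul_self_of_mem hu, mul_one]
  rw [← mul_assoc, Unitary.star_mul_self_of_mem hu, one_mul]

lemma conj_mul_conj_eq_of_mul_eq {R m : Type*} [Ring R] [StarRing R] [Fintype m]
    {X W Y : Matrix m m R} (h : X * W = W * Y) (ρ : Matrix m m R) :
    X * (W * ρ * Wᴴ) * Xᴴ = W * (Y * ρ * Yᴴ) * Wᴴ :=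
  calc X * (W * ρ * Wᴴ) * Xᴴ = X * W * ρ * (X * W)ᴴ := by
        simp only [conjTranspose_mul, Matrix.mul_assoc]
    _ = W * Y * ρ * (W * Y)ᴴ := by rw [h]
    _ = W * (Y * ρ * Yᴴ) * Wᴴ := by simp only [conjTranspose_mul, Matrix.mul_assoc]

section LocalUnitary

variable {R m n : Type*} [CommRing R] [StarRing R] [Fintype m] [DecidableEq m]
  [Fintype n] [DecidableEq n]

lemma trace_star_mul_mul_of_mem_unitary {V : Matrix m m R} (hV : V ∈ unitary (Matrix m m R))
    (U : Matrix m m R) : (star V * U * V).trace = U.trace := by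
  rw [trace_mul_cycle, Unitary.mul_star_self_of_mem hV, Matrix.one_mul]

lemma kronecker_one_mul_kronecker_of_mem_unitary {V : Matrix m m R}
    (hV : V ∈ unitary (Matrix m m R)) (V' : Matrix n n R) (U : Matrix m m R) :
    (U ⊗ₖ (1 : Matrix n n R)) * (V ⊗ₖ V') =
      (V ⊗ₖ V') * ((star V * U * V) ⊗ₖ (1 : Matrix n n R)) := by
  rw [← mul_kronecker_mul, ← mul_kronecker_mul, Matrix.one_mul, Matrix.mul_one,
    ← Matrix.mul_assoc, ← Matrix.mul_assoc, Unitary.mul_star_self_of_mem hV, Matrix.one_mul]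

end LocalUnitary

lemma sqrtFid_kronecker_conj {m n : Type*} [Fintype m] [DecidableEq m] [Fintype n]
    [DecidableEq n]
    {VA : Matrix m m ℂ} (hVA : VA ∈ unitary (Matrix m m ℂ))
    {VB : Matrix n n ℂ} (hVB : VB ∈ unitary (Matrix n n ℂ)) (ρ : Matrix (m × n) (m × n) ℂ)
    (U : Matrix m m ℂ) :
    sqrtFid ((VA ⊗ₖ VB) * ρ * (VA ⊗ₖ VB)ᴴ)
      ((U ⊗ₖ (1 : Matrix n n ℂ)) * ((VA ⊗ₖ VB) * ρ * (VA ⊗ₖ VB)ᴴ) *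
        (U ⊗ₖ (1 : Matrix n n ℂ))ᴴ)
    = sqrtFid ρ
      (((star VA * U * VA) ⊗ₖ (1 : Matrix n n ℂ)) * ρ *
        ((star VA * U * VA) ⊗ₖ (1 : Matrix n n ℂ))ᴴ) := by
  rw [conj_mul_conj_eq_of_mul_eq (kronecker_one_mul_kronecker_of_mem_unitary hVA VB U),
    sqrtFid_unitary_conj (kronecker_mem_unitary hVA hVB)]

theorem discord_of_response_local_unitary_invariance_general
    (d : ℕ)
    (ρ : Matrix (Fin 2 × Fin d) (Fin 2 × Fin d) ℂ)
    (VA : Matrix (Fin 2) (Fin 2) ℂ) (hVA : VAᴴ * VA = 1)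
    (VB : Matrix (Fin d) (Fin d) ℂ) (hVB : VBᴴ * VB = 1) :
    sSup {r : ℝ | ∃ U : Matrix (Fin 2) (Fin 2) ℂ, Uᴴ * U = 1 ∧ U.trace = 0 ∧
        r = sqrtFid ((VA ⊗ₖ VB) * ρ * (VA ⊗ₖ VB)ᴴ)
          ((U ⊗ₖ (1 : Matrix (Fin d) (Fin d) ℂ)) * ((VA ⊗ₖ VB) * ρ * (VA ⊗ₖ VB)ᴴ) *
            (U ⊗ₖ (1 : Matrix (Fin d) (Fin d) ℂ))ᴴ)}
      = sSup {r : ℝ | ∃ U : Matrix (Fin 2) (Fin 2) ℂ, Uᴴ * U = 1 ∧ U.trace = 0 ∧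
        r = sqrtFid ρ
          ((U ⊗ₖ (1 : Matrix (Fin d) (Fin d) ℂ)) * ρ *
            (U ⊗ₖ (1 : Matrix (Fin d) (Fin d) ℂ))ᴴ)} := by
  have hA : VA ∈ unitary (Matrix (Fin 2) (Fin 2) ℂ) := mem_unitaryGroup_iff'.mpr hVA
  have hA' : star VA ∈ unitary (Matrix (Fin 2) (Fin 2) ℂ) := Unitary.star_mem hA
  simp only [sqrtFid_kronecker_conj hA (mem_unitaryGroup_iff'.mpr hVB)]
  refine congrArg sSup (Set.ext fun r => ?_)
  constructor
  · rintro ⟨U, hU, htrU, rfl⟩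
    have hU : U ∈ unitary (Matrix (Fin 2) (Fin 2) ℂ) := mem_unitaryGroup_iff'.mpr hU
    exact ⟨star VA * U * VA, Unitary.star_mul_self_of_mem (mul_mem (mul_mem hA' hU) hA),
      by rw [trace_star_mul_mul_of_mem_unitary hA, htrU], rfl⟩
  · rintro ⟨U, hU, htrU, rfl⟩
    have hU : U ∈ unitary (Matrix (Fin 2) (Fin 2) ℂ) := mem_unitaryGroup_iff'.mpr hU
    refine ⟨VA * U * star VA, Unitary.star_mul_self_of_mem (mul_mem (mul_mem hA hU) hA'), ?_, ?_⟩
    · simpa [htrU] using trace_star_mul_mul_of_mem_unitary hA' U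
    · rw [star_mul_mul_mul_star_mul_of_mem_unitary hA]

theorem discord_of_response_local_unitary_invariance
    (d : ℕ) (hd : 0 < d)
    (ρ : Matrix (Fin 2 × Fin d) (Fin 2 × Fin d) ℂ)
    (hρ : ρ.PosSemidef) (htr : ρ.trace = 1)
    (VA : Matrix (Fin 2) (Fin 2) ℂ) (hVA : VAᴴ * VA = 1)
    (VB : Matrix (Fin d) (Fin d) ℂ) (hVB : VBᴴ * VB = 1) :
    sSup {r : ℝ | ∃ U : Matrix (Fin 2) (Fin 2) ℂ, Uᴴ * U = 1 ∧ U.trace = 0 ∧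
        r = sqrtFid ((VA ⊗ₖ VB) * ρ * (VA ⊗ₖ VB)ᴴ)
          ((U ⊗ₖ (1 : Matrix (Fin d) (Fin d) ℂ)) * ((VA ⊗ₖ VB) * ρ * (VA ⊗ₖ VB)ᴴ) *
            (U ⊗ₖ (1 : Matrix (Fin d) (Fin d) ℂ))ᴴ)}
      = sSup {r : ℝ | ∃ U : Matrix (Fin 2) (Fin 2) ℂ, Uᴴ * U = 1 ∧ U.trace = 0 ∧
        r = sqrtFid ρ
          ((U ⊗ₖ (1 : Matrix (Fin d) (Fin d) ℂ)) * ρ *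
            (U ⊗ₖ (1 : Matrix (Fin d) (Fin d) ℂ))ᴴ)} :=
  discord_of_response_local_unitary_invariance_general d ρ VA hVA VB hVB
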